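/- Compliance through a non-respectful orchestrator: let f = ⟨a,ā⟩.1 ∨ ⟨ε,b̄⟩.1 for distinct names a and b. Then f : ā.1 ⊣⊩ a.1 (the client ā is compliant with the server a through f, since every computation of the orchestrated system uses only the respectful trace ⟨a,ā⟩ and ends with client 1), although f itself is not respectful (it has the maximal trace ⟨ε,b̄⟩, which is not sound since it makes the server-to-client count of b negative). -/
import Mathlib


/-! Core formalisation: session contracts, session orchestrators, orchestrated systems,
    buffers, (finite and infinite) sequences of orchestration actions, respectfulness,
    and the compliance relations. Names are natural numbers. Recursion binders use
    de Bruijn indices (`var n`, with `mu` binding index 0); equi-recursive identification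
    of `rec x.σ` with its unfolding is realised by unfolding rules in the LTSs. -/

abbrev Name := ℕ

/-- Actions of session contracts: an input `a` or an output `ā`. -/
inductive Act : Type where
  | inp : Name → Act
  | out : Name → Act
deriving DecidableEq

/-- Orchestration actions:
    `cIn a` = ⟨a,ε⟩, `cSync a` = ⟨a,ā⟩ (category ι_L);
    `sIn a` = ⟨ε,a⟩, `sSync a` = ⟨ā,a⟩ (category ι_R);
    `cOut a` = ⟨ā,ε⟩, `sOut a` = ⟨ε,ā⟩ (category o). -/
inductive OAct : Type where
  | cIn   : Name → OAct
  | cSync : Name → OAct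
  | sIn   : Name → OAct
  | sSync : Name → OAct
  | cOut  : Name → OAct
  | sOut  : Name → OAct
deriving DecidableEq

def OAct.catL : OAct → Prop
  | .cIn _ => True
  | .cSync _ => True
  | _ => False

def OAct.catR : OAct → Prop
  | .sIn _ => True
  | .sSync _ => True
  | _ => False

def OAct.catO : OAct → Prop
  | .cOut _ => True
  | .sOut _ => True
  | _ => False

/-- Raw session contracts: `one` = 1 (success), `ext l` = external choice a₁.σ₁+⋯+aₙ.σₙ,
    `int l` = internal choice ā₁.σ₁⊕⋯⊕āₙ.σₙ, de Bruijn variables and recursion. -/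
inductive SC : Type where
  | one : SC
  | ext : List (Name × SC) → SC
  | int : List (Name × SC) → SC
  | var : ℕ → SC
  | mu : SC → SC

namespace SC

/-- Substitution of the (closed) term `u` for the variable of de Bruijn index `k`. -/
def subst (u : SC) : SC → ℕ → SC
  | SC.one, _ => SC.one
  | SC.ext l, k => SC.ext (l.attach.map fun p => (p.1.1, subst u p.1.2 k))
  | SC.int l, k => SC.int (l.attach.map fun p => (p.1.1, subst u p.1.2 k))
  | SC.var x, k => if x = k then u else SC.var x
  | SC.mu b, k => SC.mu (subst u b (k + 1))
termination_by s _ => sizeOf s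
decreasing_by
  · obtain ⟨⟨a1, s1⟩, hp⟩ := p
    have := List.sizeOf_lt_of_mem hp
    simp_wf; simp at this; omega
  · obtain ⟨⟨a1, s1⟩, hp⟩ := p
    have := List.sizeOf_lt_of_mem hp
    simp_wf; simp at this; omega
  · simp_wf

/-- One-step unfolding of a recursive contract: `rec x.σ  ↦  σ[rec x.σ / x]`. -/
def unfold (b : SC) : SC := subst (SC.mu b) b 0

/-- All free de Bruijn indices are `< n`. -/
inductive ClosedAbove : SC → ℕ → Prop where
  | one : ∀ n, ClosedAbove .one n
  | ext : ∀ l n, (∀ p ∈ l, ClosedAbove p.2 n) → ClosedAbove (.ext l) n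
  | int : ∀ l n, (∀ p ∈ l, ClosedAbove p.2 n) → ClosedAbove (.int l) n
  | var : ∀ x n, x < n → ClosedAbove (.var x) n
  | mu : ∀ b n, ClosedAbove b (n + 1) → ClosedAbove (.mu b) n

/-- Structural well-formedness: choices are nonempty with pairwise distinct names,
    and recursion bodies are not variables (contractiveness). -/
inductive WF : SC → Prop where
  | one : WF .one
  | ext : ∀ l, l ≠ [] → (l.map Prod.fst).Nodup → (∀ p ∈ l, WF p.2) → WF (.ext l)
  | int : ∀ l, l ≠ [] → (l.map Prod.fst).Nodup → (∀ p ∈ l, WF p.2) → WF (.int l)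
  | var : ∀ x, WF (.var x)
  | mu : ∀ b, (∀ x, b ≠ .var x) → WF b → WF (.mu b)

/-- τ-transitions of session contracts (with equi-recursive unfolding). -/
inductive Tau : SC → SC → Prop where
  | int : ∀ l p, p ∈ l → Tau (SC.int l) (SC.int [p])
  | unfold : ∀ b σ', Tau b.unfold σ' → Tau (SC.mu b) σ'

/-- Labelled transitions of session contracts (with equi-recursive unfolding). -/
inductive Step : SC → Act → SC → Prop where
  | ext : ∀ l a σ, (a, σ) ∈ l → Step (SC.ext l) (Act.inp a) σ
  | out : ∀ a σ, Step (SC.int [(a, σ)]) (Act.out a) σ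
  | unfold : ∀ b α σ', Step b.unfold α σ' → Step (SC.mu b) α σ'

end SC

/-- `σ` is a session contract: a closed, well-formed raw session contract. -/
def IsContract (σ : SC) : Prop := σ.ClosedAbove 0 ∧ σ.WF

/-- Raw session orchestrators: `one` = 1, `choice l` = μ₁.f₁ ∨ ⋯ ∨ μₙ.fₙ,
    de Bruijn variables and recursion. -/
inductive Orch : Type where
  | one : Orch
  | choice : List (OAct × Orch) → Orch
  | var : ℕ → Orch
  | mu : Orch → Orch

namespace Orch

/-- Simultaneous substitution of the (closed) orchestrators `θ` for the free variables. -/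
def msubst : Orch → List Orch → Orch
  | .one, _ => .one
  | .choice l, θ => .choice (l.attach.map fun p => (p.1.1, msubst p.1.2 θ))
  | .var x, θ => θ.getD x (.var x)
  | .mu b, θ => .mu (msubst b (Orch.var 0 :: θ))
termination_by f _ => sizeOf f
decreasing_by
  · obtain ⟨⟨a1, s1⟩, hp⟩ := p
    have := List.sizeOf_lt_of_mem hp
    simp_wf; simp at this; omega
  · simp_wf

/-- One-step unfolding of a recursive orchestrator. -/
def unfold (b : Orch) : Orch := msubst b [Orch.mu b]

inductive ClosedAbove : Orch → ℕ → Prop where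
  | one : ∀ n, ClosedAbove .one n
  | choice : ∀ l n, (∀ p ∈ l, ClosedAbove p.2 n) → ClosedAbove (.choice l) n
  | var : ∀ x n, x < n → ClosedAbove (.var x) n
  | mu : ∀ b n, ClosedAbove b (n + 1) → ClosedAbove (.mu b) n

/-- Structural well-formedness of orchestrators: every choice is nonempty and either all
    its prefixes are of category ι_L, or all of category ι_R, or it is a single prefix of
    category o; recursion bodies are not variables. -/
inductive WF : Orch → Prop where
  | one : WF .one
  | choice : ∀ l, l ≠ [] →
      ((∀ p ∈ l, OAct.catL p.1) ∨ (∀ p ∈ l, OAct.catR p.1) ∨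
        (∃ μ g, OAct.catO μ ∧ l = [(μ, g)])) →
      (∀ p ∈ l, WF p.2) → WF (.choice l)
  | var : ∀ x, WF (.var x)
  | mu : ∀ b, (∀ x, b ≠ .var x) → WF b → WF (.mu b)

/-- LTS of orchestrators (with equi-recursive unfolding). -/
inductive Step : Orch → OAct → Orch → Prop where
  | pre : ∀ l μ g, (μ, g) ∈ l → Step (Orch.choice l) μ g
  | unfold : ∀ b μ g, Step b.unfold μ g → Step (Orch.mu b) μ g

/-- Finite traces of an orchestrator. -/
inductive Trace : Orch → List OAct → Orch → Prop where
  | nil : ∀ f, Trace f [] f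
  | cons : ∀ f μ g ms h, Step f μ g → Trace g ms h → Trace f (μ :: ms) h

def NoStep (f : Orch) : Prop := ¬ ∃ μ g, Step f μ g

end Orch

/-- `f` is a session orchestrator: closed and well-formed. -/
def IsOrch (f : Orch) : Prop := f.ClosedAbove 0 ∧ f.WF

/-! ### Orchestrated systems ρ ∥_f σ -/

abbrev Conf := SC × Orch × SC

namespace Sys

/-- Internal (τ) steps of an orchestrated system. -/
inductive Tau : Conf → Conf → Prop where
  | client : ∀ ρ ρ' f σ, SC.Tau ρ ρ' → Tau (ρ, f, σ) (ρ', f, σ)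
  | server : ∀ ρ f σ σ', SC.Tau σ σ' → Tau (ρ, f, σ) (ρ, f, σ')

/-- Steps of an orchestrated system, labelled by the orchestration action performed. -/
inductive Step : Conf → OAct → Conf → Prop where
  | syncCS : ∀ ρ ρ' f f' σ σ' a, SC.Step ρ (Act.out a) ρ' → Orch.Step f (OAct.cSync a) f' →
      SC.Step σ (Act.inp a) σ' → Step (ρ, f, σ) (OAct.cSync a) (ρ', f', σ')
  | syncSC : ∀ ρ ρ' f f' σ σ' a, SC.Step ρ (Act.inp a) ρ' → Orch.Step f (OAct.sSync a) f' →
      SC.Step σ (Act.out a) σ' → Step (ρ, f, σ) (OAct.sSync a) (ρ', f', σ')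
  | cIn : ∀ ρ ρ' f f' σ a, SC.Step ρ (Act.out a) ρ' → Orch.Step f (OAct.cIn a) f' →
      Step (ρ, f, σ) (OAct.cIn a) (ρ', f', σ)
  | cOut : ∀ ρ ρ' f f' σ a, SC.Step ρ (Act.inp a) ρ' → Orch.Step f (OAct.cOut a) f' →
      Step (ρ, f, σ) (OAct.cOut a) (ρ', f', σ)
  | sIn : ∀ ρ f f' σ σ' a, Orch.Step f (OAct.sIn a) f' → SC.Step σ (Act.out a) σ' →
      Step (ρ, f, σ) (OAct.sIn a) (ρ, f', σ')
  | sOut : ∀ ρ f f' σ σ' a, Orch.Step f (OAct.sOut a) f' → SC.Step σ (Act.inp a) σ' →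
      Step (ρ, f, σ) (OAct.sOut a) (ρ, f', σ')

/-- Any number of τ-steps. -/
def TauRT : Conf → Conf → Prop := Relation.ReflTransGen Tau

/-- Weak labelled step `⟹^μ`. -/
def WStep (c : Conf) (μ : OAct) (c' : Conf) : Prop :=
  ∃ c₁ c₂, TauRT c c₁ ∧ Step c₁ μ c₂ ∧ TauRT c₂ c'

/-- `Exec c ms c'`: the system performs the finite sequence `ms` of orchestration
    actions (interspersed with τ-steps), i.e. `c ⟹^{ms} c'`. -/
inductive Exec : Conf → List OAct → Conf → Prop where
  | nil : ∀ c c', TauRT c c' → Exec c [] c'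
  | cons : ∀ c c₁ c₂ μ ms c', TauRT c c₁ → Step c₁ μ c₂ → Exec c₂ ms c' →
      Exec c (μ :: ms) c'

/-- Infinite executions along the infinite sequence `s` of orchestration actions. -/
def InfExec (c : Conf) (s : ℕ → OAct) : Prop :=
  ∃ cs : ℕ → Conf, cs 0 = c ∧ ∀ n, WStep (cs n) (s n) (cs (n + 1))

/-- `c ↛`: no τ-step and no labelled step is possible. -/
def Stuck (c : Conf) : Prop := (¬ ∃ c', Tau c c') ∧ (¬ ∃ μ c', Step c μ c')

end Sys

/-- `f` is ρ·σ strict: every finite trace of `f` can be performed by the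
    orchestrated system ρ ∥_f σ. -/
def Strict (ρ : SC) (f : Orch) (σ : SC) : Prop :=
  ∀ ms g, Orch.Trace f ms g → ∃ c', Sys.Exec (ρ, f, σ) ms c'

/-- Disrespectful strict compliance `f : ρ ⊣⊩ᵈˢ σ`. -/
def DSCompliant (f : Orch) (ρ σ : SC) : Prop :=
  Strict ρ f σ ∧
  ∀ ms ρ' f' σ', Sys.Exec (ρ, f, σ) ms (ρ', f', σ') → Sys.Stuck (ρ', f', σ') → ρ' = SC.one

/-! ### Buffers and respectfulness -/

/-- The contribution of one orchestration action to the two buffer counters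
    (client-to-server, server-to-client) for the name `a`. -/
def OAct.delta : OAct → Name → ℤ × ℤ
  | .cIn b, a => (if b = a then 1 else 0, 0)
  | .cOut b, a => (if b = a then -1 else 0, 0)
  | .sIn b, a => (0, if b = a then 1 else 0)
  | .sOut b, a => (0, if b = a then -1 else 0)
  | _, _ => (0, 0)

/-- The state of the (initially empty) buffer for name `a` after the finite sequence
    `ms`: `(client-to-server count, server-to-client count)`. -/
def bufCount (ms : List OAct) (a : Name) : ℤ × ℤ :=
  ((ms.map fun μ => (μ.delta a).1).sum, (ms.map fun μ => (μ.delta a).2).sum)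

/-- The actions kept by the left-restriction `μ⃗↾ₐ`: exactly ⟨ε,ā⟩ and ⟨a,ε⟩. -/
def OAct.keepA (a : Name) (μ : OAct) : Prop := μ = OAct.sOut a ∨ μ = OAct.cIn a

def OAct.isSIn : OAct → Prop
  | .sIn _ => True
  | _ => False

/-- A finite or infinite sequence of orchestration actions. -/
inductive OSeq : Type where
  | fin : List OAct → OSeq
  | inf : (ℕ → OAct) → OSeq

namespace OSeq

/-- The finite prefixes of a sequence. -/
def prefixes : OSeq → Set (List OAct)
  | .fin l => {t | t <+: l}
  | .inf s => {t | ∃ n, t = (List.range n).map s}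

/-- Soundness: along every prefix, both buffer counts of every name stay ≥ 0. -/
def Sound (v : OSeq) : Prop :=
  ∀ t ∈ v.prefixes, ∀ a, 0 ≤ (bufCount t a).1 ∧ 0 ≤ (bufCount t a).2

/-- The left-restriction `μ⃗↾ₐ` is finite. -/
def restrFinite : OSeq → Name → Prop
  | .fin _, _ => True
  | .inf s, a => ∃ N, ∀ n, N ≤ n → ¬ OAct.keepA a (s n)

/-- "After all of μ⃗ the client-to-server count of `a` is 0." -/
def csFinalZero : OSeq → Name → Prop
  | .fin l, a => (bufCount l a).1 = 0
  | .inf s, a => ∃ N, ∀ n, N ≤ n → (bufCount ((List.range n).map s) a).1 = 0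

/-- The left-restriction `μ⃗↾ₐ` is definitely-⟨a,ε⟩: from some point on, every element
    of μ⃗ kept by the restriction is ⟨a,ε⟩. -/
def defCIn : OSeq → Name → Prop
  | .fin _, _ => True
  | .inf s, a => ∃ N, ∀ n, N ≤ n → OAct.keepA a (s n) → s n = OAct.cIn a

/-- Client-respectfulness of a sequence. -/
def ClientRespectful (v : OSeq) : Prop :=
  ∀ a, (v.restrFinite a ∧ v.csFinalZero a) ∨ (¬ v.restrFinite a ∧ ¬ v.defCIn a)

/-- Non-definitely server-inputted sequences. -/
def NonDefSI : OSeq → Prop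
  | .fin _ => True
  | .inf s => ¬ ∃ N, ∀ n, N ≤ n → OAct.isSIn (s n)

/-- Respectful sequences. -/
def Respectful (v : OSeq) : Prop := v.Sound ∧ v.ClientRespectful ∧ v.NonDefSI

end OSeq

/-- Maximal traces of an orchestrator: finite traces ending in an orchestrator without
    transitions, and infinite traces. -/
def Orch.MaxTrace (f : Orch) : OSeq → Prop
  | .fin ms => ∃ g, Orch.Trace f ms g ∧ g.NoStep
  | .inf s => ∃ fs : ℕ → Orch, fs 0 = f ∧ ∀ n, Orch.Step (fs n) (s n) (fs (n + 1))

/-- A respectful orchestrator: all its maximal traces are respectful. -/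
def Orch.Respectful (f : Orch) : Prop := ∀ v, f.MaxTrace v → v.Respectful

/-- Orchestrated session compliance `f : ρ ⊣⊩ σ`. -/
def Compliant (f : Orch) (ρ σ : SC) : Prop :=
  (∀ ms ρ' f' σ', Sys.Exec (ρ, f, σ) ms (ρ', f', σ') → Sys.Stuck (ρ', f', σ') →
      ρ' = SC.one ∧ OSeq.Respectful (.fin ms)) ∧
  (∀ s : ℕ → OAct, Sys.InfExec (ρ, f, σ) s → OSeq.Respectful (.inf s))

/-- `ρ ⊣⊩ σ`: some session orchestrator makes `ρ` compliant with `σ`. -/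
def Comply (ρ σ : SC) : Prop := ∃ f, IsOrch f ∧ Compliant f ρ σ

/-- `ρ ⊣⊩ᵈˢ σ`. -/
def DSComply (ρ σ : SC) : Prop := ∃ f, IsOrch f ∧ DSCompliant f ρ σ
/-- Compliance through a non-respectful orchestrator: for distinct names a
and b, f = ⟨a,ā⟩.1 ∨ ⟨ε,b̄⟩.1 makes the client ā compliant with the server a, although f
itself is not respectful: it has the maximal trace ⟨ε,b̄⟩, which is not sound. -/
theorem nonrespectful_orchestrator_compliance :
    ∀ a b : Name, a ≠ b →
      let f : Orch := .choice [(OAct.cSync a, .one), (OAct.sOut b, .one)]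
      Compliant f (SC.int [(a, SC.one)]) (SC.ext [(a, SC.one)]) ∧
      Orch.MaxTrace f (OSeq.fin [OAct.sOut b]) ∧
      ¬ OSeq.Sound (OSeq.fin [OAct.sOut b]) ∧
      ¬ Orch.Respectful f := by
  intro a b hab
  intro f
  have hf : f = Orch.choice [(OAct.cSync a, .one), (OAct.sOut b, .one)] := rfl
  clear_value f
  set ρ : SC := SC.int [(a, SC.one)] with hρ
  set σ : SC := SC.ext [(a, SC.one)] with hσ
  -- basic inversion facts
  have hρtau : ∀ ρ', SC.Tau ρ ρ' → ρ' = ρ := by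
    intro ρ' h
    rw [hρ] at h
    cases h with
    | int l p hp => simp at hp; subst hp; rfl
  have hσtau : ∀ σ', ¬ SC.Tau σ σ' := by
    intro σ' h; rw [hσ] at h; cases h
  have hone_tau : ∀ σ', ¬ SC.Tau SC.one σ' := by
    intro σ' h; cases h
  have hone_step : ∀ α σ', ¬ SC.Step SC.one α σ' := by
    intro α σ' h; cases h
  have honeO_step : ∀ μ g, ¬ Orch.Step Orch.one μ g := by
    intro μ g h; cases h
  have hρstep : ∀ α ρ', SC.Step ρ α ρ' → α = Act.out a ∧ ρ' = SC.one := by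
    intro α ρ' h; rw [hρ] at h
    cases h with
    | out => exact ⟨rfl, rfl⟩
  have hσstep : ∀ α σ', SC.Step σ α σ' → α = Act.inp a ∧ σ' = SC.one := by
    intro α σ' h; rw [hσ] at h
    cases h with
    | ext l a' σ'' hm => simp at hm; obtain ⟨h1, h2⟩ := hm; subst h1; subst h2; exact ⟨rfl, rfl⟩
  have hfstep : ∀ μ g, Orch.Step f μ g →
      (μ = OAct.cSync a ∧ g = Orch.one) ∨ (μ = OAct.sOut b ∧ g = Orch.one) := by
    intro μ g h
    rw [hf] at h
    cases h with
    | pre l μ' g' hm =>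
      simp at hm
      rcases hm with ⟨h1, h2⟩ | ⟨h1, h2⟩
      · left; exact ⟨h1, h2⟩
      · right; exact ⟨h1, h2⟩
  -- system-level facts
  have hstau : ∀ c, Sys.Tau (ρ, f, σ) c → c = (ρ, f, σ) := by
    intro c h
    cases h with
    | client _ ρ' _ _ ht => rw [hρtau _ ht]
    | server _ _ _ σ' ht => exact absurd ht (hσtau σ')
  have hstaurt : ∀ c, Sys.TauRT (ρ, f, σ) c → c = (ρ, f, σ) := by
    intro c h
    induction h with
    | refl => rfl
    | tail h1 h2 ih => subst ih; exact hstau _ h2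
  have hfinal_tau : ∀ c, ¬ Sys.Tau (SC.one, Orch.one, SC.one) c := by
    intro c h
    cases h with
    | client _ ρ' _ _ ht => exact hone_tau _ ht
    | server _ _ _ σ' ht => exact hone_tau _ ht
  have hfinal_step : ∀ μ c, ¬ Sys.Step (SC.one, Orch.one, SC.one) μ c := by
    intro μ c h
    cases h with
    | syncCS _ _ _ _ _ _ _ h1 _ _ => exact hone_step _ _ h1
    | syncSC _ _ _ _ _ _ _ h1 _ _ => exact hone_step _ _ h1
    | cIn _ _ _ _ _ _ h1 _ => exact hone_step _ _ h1
    | cOut _ _ _ _ _ _ h1 _ => exact hone_step _ _ h1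
    | sIn _ _ _ _ _ _ h1 _ => exact honeO_step _ _ h1
    | sOut _ _ _ _ _ _ h1 _ => exact honeO_step _ _ h1
  have hfinal_taurt : ∀ c, Sys.TauRT (SC.one, Orch.one, SC.one) c →
      c = (SC.one, Orch.one, SC.one) := by
    intro c h
    induction h with
    | refl => rfl
    | tail h1 h2 ih => subst ih; exact absurd h2 (hfinal_tau _)
  have hfinal_stuck : Sys.Stuck (SC.one, Orch.one, SC.one) := by
    constructor
    · rintro ⟨c, h⟩; exact hfinal_tau _ h
    · rintro ⟨μ, c, h⟩; exact hfinal_step _ _ h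
  have hsstep : ∀ μ c, Sys.Step (ρ, f, σ) μ c →
      μ = OAct.cSync a ∧ c = (SC.one, Orch.one, SC.one) := by
    intro μ c h
    cases h with
    | syncCS _ _ _ _ _ _ a' h1 h2 h3 =>
      obtain ⟨hα, hρ'⟩ := hρstep _ _ h1
      obtain ⟨hβ, hσ'⟩ := hσstep _ _ h3
      cases hα
      rcases hfstep _ _ h2 with ⟨hm, hg⟩ | ⟨hm, hg⟩
      · cases hm; subst hρ'; subst hσ'; subst hg; exact ⟨rfl, rfl⟩
      · exact absurd hm (by simp)
    | syncSC _ _ _ _ _ _ a' h1 h2 h3 =>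
      obtain ⟨hα, _⟩ := hρstep _ _ h1; exact absurd hα (by simp)
    | cIn _ _ _ _ _ a' h1 h2 =>
      rcases hfstep _ _ h2 with ⟨hm, _⟩ | ⟨hm, _⟩ <;> exact absurd hm (by simp)
    | cOut _ _ _ _ _ a' h1 h2 =>
      rcases hfstep _ _ h2 with ⟨hm, _⟩ | ⟨hm, _⟩ <;> exact absurd hm (by simp)
    | sIn _ _ _ _ _ a' h1 h2 =>
      rcases hfstep _ _ h1 with ⟨hm, _⟩ | ⟨hm, _⟩ <;> exact absurd hm (by simp)
    | sOut _ _ _ _ _ a' h1 h2 =>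
      rcases hfstep _ _ h1 with ⟨hm, hg⟩ | ⟨hm, hg⟩
      · exact absurd hm (by simp)
      · -- μ = sOut b, so the server must input b, but it only inputs a
        obtain ⟨hβ, _⟩ := hσstep _ _ h2
        cases hm
        cases hβ
        exact absurd rfl hab
  have hstart_notstuck : ¬ Sys.Stuck (ρ, f, σ) := by
    rintro ⟨_, h2⟩
    apply h2
    refine ⟨OAct.cSync a, (SC.one, Orch.one, SC.one), ?_⟩
    exact Sys.Step.syncCS ρ SC.one f Orch.one σ SC.one a
      (by rw [hρ]; exact SC.Step.out a SC.one)
      (by rw [hf]; exact Orch.Step.pre _ _ _ (by simp))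
      (by rw [hσ]; exact SC.Step.ext _ a SC.one (by simp))
  -- exec characterization
  have hexec : ∀ ms c', Sys.Exec (ρ, f, σ) ms c' → Sys.Stuck c' →
      ms = [OAct.cSync a] ∧ c' = (SC.one, Orch.one, SC.one) := by
    intro ms c' he hst
    cases he with
    | nil _ _ ht =>
      exact absurd (by rw [← hstaurt _ ht]; exact hst) hstart_notstuck
    | cons _ c₁ c₂ μ ms' _ ht hs he2 =>
      have hc₁ := hstaurt _ ht; subst hc₁
      obtain ⟨hμ, hc₂⟩ := hsstep _ _ hs; subst hμ; subst hc₂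
      cases he2 with
      | nil _ _ ht2 => rw [hfinal_taurt _ ht2]; exact ⟨rfl, rfl⟩
      | cons _ c₁' c₂' μ' ms'' _ ht2 hs2 _ =>
        have := hfinal_taurt _ ht2; subst this
        exact absurd hs2 (hfinal_step _ _)
  -- respectfulness of the finite trace [cSync a]
  have hresp : OSeq.Respectful (OSeq.fin [OAct.cSync a]) := by
    refine ⟨?_, ?_, trivial⟩
    · intro t ht a'
      rcases ht with ⟨s, hs⟩
      cases t with
      | nil => simp [bufCount]
      | cons x t' =>
        rw [List.cons_append] at hs
        injection hs with h1 h2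
        have : t' = [] := (List.append_eq_nil_iff.mp h2).1
        subst this; subst h1
        simp [bufCount, OAct.delta]
    · intro a'
      left
      refine ⟨trivial, ?_⟩
      simp [OSeq.csFinalZero, bufCount, OAct.delta]
  refine ⟨⟨?_, ?_⟩, ?_, ?_, ?_⟩
  · -- finite executions
    intro ms ρ' f' σ' he hst
    obtain ⟨hms, hc⟩ := hexec ms _ he hst
    injection hc with h1 h2
    subst hms
    exact ⟨h1, hresp⟩
  · -- no infinite executions
    intro s hinf
    exfalso
    obtain ⟨cs, hcs0, hstep⟩ := hinf
    have h0 := hstep 0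
    rw [hcs0] at h0
    obtain ⟨c₁, c₂, ht1, hs1, ht2⟩ := h0
    have := hstaurt _ ht1; subst this
    obtain ⟨_, hc₂⟩ := hsstep _ _ hs1; subst hc₂
    have hcs1 := hfinal_taurt _ ht2
    have h1 := hstep 1
    rw [hcs1] at h1
    obtain ⟨c₁', c₂', ht1', hs1', _⟩ := h1
    have := hfinal_taurt _ ht1'; subst this
    exact hfinal_step _ _ hs1'
  · -- maximal trace [sOut b]
    refine ⟨Orch.one, ?_, ?_⟩
    · exact Orch.Trace.cons f (OAct.sOut b) Orch.one [] Orch.one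
        (by rw [hf]; exact Orch.Step.pre _ _ _ (by simp)) (Orch.Trace.nil _)
    · rintro ⟨μ, g, h⟩; exact honeO_step _ _ h
  · -- that trace is not sound
    intro h
    have := (h [OAct.sOut b] (List.prefix_refl _) b).2
    simp [bufCount, OAct.delta] at this
  · -- f is not respectful
    intro h
    have hmax : Orch.MaxTrace f (OSeq.fin [OAct.sOut b]) := by
      refine ⟨Orch.one, ?_, ?_⟩
      · exact Orch.Trace.cons f (OAct.sOut b) Orch.one [] Orch.one
          (by rw [hf]; exact Orch.Step.pre _ _ _ (by simp)) (Orch.Trace.nil _)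
      · rintro ⟨μ, g, hh⟩; exact honeO_step _ _ hh
    have hsound := (h _ hmax).1
    have := (hsound [OAct.sOut b] (List.prefix_refl _) b).2
    simp [bufCount, OAct.delta] at this
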